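/- arXiv:2304.13952 — 3 statements merged into one kernel-verified Lean document; each statement's English description precedes it below -/
import Mathlib

section
/- Let ν be a measure on ℝ^d (d ≥ 1) and suppose there exist constants c > 0, ρ₀ > 0 and α ∈ (0,2) such that for every unit vector η ∈ ℝ^d and every ρ ∈ (0, ρ₀], ∫_{|z| ≤ ρ} |η·z|² ν(dz) ≥ c ρ^{2−α}. Then for every ξ ∈ ℝ^d with |ξ| ≥ 1/ρ₀, one has ∫_{ℝ^d} (1 − cos(ξ·z)) ν(dz) ≥ (c/3) |ξ|^α. -/
/-!
On the ball `|z| ≤ |ξ|⁻¹` we have `|ξ·z| ≤ 1`, where `1 - cos t ≥ t² / 3`. Writing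
`ξ·z = |ξ| (η·z)` with `η = ξ / |ξ|`, the symbol is therefore at least `|ξ|² / 3` times the
truncated second moment of `ν` in direction `η` at radius `ρ = |ξ|⁻¹ ≤ ρ₀`, which the
nondegeneracy hypothesis bounds below by `c ρ^(2 - α)`; and `|ξ|² ρ^(2 - α) = |ξ|^α`.
-/

open MeasureTheory ENNReal RealInnerProductSpace

lemma Real.sq_div_three_le_one_sub_cos {t : ℝ} (ht : |t| ≤ 1) : t ^ 2 / 3 ≤ 1 - Real.cos t := by
  have hquartic : |t| ^ 4 ≤ t ^ 2 := by
    rw [← sq_abs t, show |t| ^ 4 = |t| ^ 2 * |t| ^ 2 by ring]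
    exact mul_le_of_le_one_right (sq_nonneg _) (pow_le_one₀ (abs_nonneg t) ht)
  have hcos := (abs_le.mp (Real.cos_bound ht)).2
  nlinarith [sq_nonneg t]

section

variable {E : Type*} [NormedAddCommGroup E] [InnerProductSpace ℝ E]

lemma sq_inner_div_three_eq (ξ z : E) :
    ⟪ξ, z⟫ ^ 2 / 3 = ‖ξ‖ ^ 2 / 3 * ⟪‖ξ‖⁻¹ • ξ, z⟫ ^ 2 := by
  rcases eq_or_ne ξ 0 with rfl | hξ
  · simp
  · rw [real_inner_smul_left]
    field_simp

lemma setLIntegral_sq_inner_div_three_le_lintegral_one_sub_cos [MeasurableSpace E]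
    [OpensMeasurableSpace E] (ν : Measure E) (ξ : E) :
    ∫⁻ z in {z | ‖z‖ ≤ ‖ξ‖⁻¹}, ENNReal.ofReal (⟪ξ, z⟫ ^ 2 / 3) ∂ν ≤
      ∫⁻ z, ENNReal.ofReal (1 - Real.cos ⟪ξ, z⟫) ∂ν := by
  have hball : MeasurableSet {z : E | ‖z‖ ≤ ‖ξ‖⁻¹} :=
    (isClosed_le continuous_norm continuous_const).measurableSet
  refine le_trans (setLIntegral_mono' hball fun z hz ↦ ?_) (setLIntegral_le_lintegral _ _)
  refine ENNReal.ofReal_le_ofReal (Real.sq_div_three_le_one_sub_cos ?_)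
  calc |⟪ξ, z⟫| ≤ ‖ξ‖ * ‖z‖ := abs_real_inner_le_norm ξ z
    _ ≤ ‖ξ‖ * ‖ξ‖⁻¹ := mul_le_mul_of_nonneg_left hz (norm_nonneg ξ)
    _ ≤ 1 := mul_inv_le_one

end

lemma Real.rpow_eq_sq_mul_inv_rpow {r : ℝ} (hr : 0 < r) (α : ℝ) :
    r ^ α = r ^ 2 * r⁻¹ ^ (2 - α) := by
  rw [Real.inv_rpow hr.le, ← Real.rpow_neg hr.le, ← Real.rpow_natCast, ← Real.rpow_add hr]
  norm_num

theorem nondegeneracy_implies_symbol_lower_bound_general {d : ℕ}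
    (ν : Measure (EuclideanSpace ℝ (Fin d))) (c ρ₀ α : ℝ)
    (hρ₀ : 0 < ρ₀)
    (hnd : ∀ η : EuclideanSpace ℝ (Fin d), ‖η‖ = 1 → ∀ ρ : ℝ, 0 < ρ → ρ ≤ ρ₀ →
      ENNReal.ofReal (c * ρ ^ (2 - α)) ≤
        ∫⁻ z in {z | ‖z‖ ≤ ρ}, ENNReal.ofReal ((inner ℝ η z : ℝ) ^ 2) ∂ν) :
    ∀ ξ : EuclideanSpace ℝ (Fin d), 1 / ρ₀ ≤ ‖ξ‖ →
      ENNReal.ofReal (c / 3 * ‖ξ‖ ^ α) ≤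
        ∫⁻ z, ENNReal.ofReal (1 - Real.cos (inner ℝ ξ z : ℝ)) ∂ν := by
  intro ξ hξ
  have hξpos : 0 < ‖ξ‖ := (one_div_pos.mpr hρ₀).trans_le hξ
  have hρ : ‖ξ‖⁻¹ ≤ ρ₀ := by rwa [inv_le_comm₀ hξpos hρ₀, ← one_div]
  have hη : ‖(‖ξ‖⁻¹ : ℝ) • ξ‖ = 1 := norm_smul_inv_norm (norm_pos_iff.mp hξpos)
  calc ENNReal.ofReal (c / 3 * ‖ξ‖ ^ α)
      = ENNReal.ofReal (‖ξ‖ ^ 2 / 3) * ENNReal.ofReal (c * ‖ξ‖⁻¹ ^ (2 - α)) := by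
        rw [← ENNReal.ofReal_mul (by positivity), Real.rpow_eq_sq_mul_inv_rpow hξpos α]
        ring_nf
    _ ≤ ENNReal.ofReal (‖ξ‖ ^ 2 / 3) *
          ∫⁻ z in {z | ‖z‖ ≤ ‖ξ‖⁻¹}, ENNReal.ofReal (⟪‖ξ‖⁻¹ • ξ, z⟫ ^ 2) ∂ν := by
        gcongr
        exact hnd _ hη _ (inv_pos.mpr hξpos) hρ
    _ = ∫⁻ z in {z | ‖z‖ ≤ ‖ξ‖⁻¹}, ENNReal.ofReal (⟪ξ, z⟫ ^ 2 / 3) ∂ν := by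
        rw [← lintegral_const_mul' _ _ ENNReal.ofReal_ne_top]
        simp_rw [sq_inner_div_three_eq ξ, ENNReal.ofReal_mul (by positivity : 0 ≤ ‖ξ‖ ^ 2 / 3)]
    _ ≤ _ := setLIntegral_sq_inner_div_three_le_lintegral_one_sub_cos ν ξ

theorem nondegeneracy_implies_symbol_lower_bound {d : ℕ} (hd : 1 ≤ d)
    (ν : Measure (EuclideanSpace ℝ (Fin d))) (c ρ₀ α : ℝ)
    (hc : 0 < c) (hρ₀ : 0 < ρ₀) (hα0 : 0 < α) (hα2 : α < 2)
    (hnd : ∀ η : EuclideanSpace ℝ (Fin d), ‖η‖ = 1 → ∀ ρ : ℝ, 0 < ρ → ρ ≤ ρ₀ →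
      ENNReal.ofReal (c * ρ ^ (2 - α)) ≤
        ∫⁻ z in {z | ‖z‖ ≤ ρ}, ENNReal.ofReal ((inner ℝ η z : ℝ) ^ 2) ∂ν) :
    ∀ ξ : EuclideanSpace ℝ (Fin d), 1 / ρ₀ ≤ ‖ξ‖ →
      ENNReal.ofReal (c / 3 * ‖ξ‖ ^ α) ≤
        ∫⁻ z, ENNReal.ofReal (1 - Real.cos (inner ℝ ξ z : ℝ)) ∂ν :=
  nondegeneracy_implies_symbol_lower_bound_general ν c ρ₀ α hρ₀ hnd
end

section
/- Let f : ℝ^d → ℝ be differentiable with ‖∇f‖_∞ ≤ G and with s-Hölder continuous gradient with constant K. Then for all x, y, z ∈ ℝ^d: |f(x+z) − f(x) − f(y+z) + f(y)| ≤ max(2G, K) · |x − y| · min(1, |z|^s). -/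
/-!
Write `Δ(x) = f (x + z) - f x`, so that the quantity to bound is `Δ x - Δ y`. On the one hand each
of `f (x + z) - f (y + z)` and `f x - f y` is at most `G ‖x - y‖` by the mean value theorem. On the
other hand `Δ` has derivative `f'(t + z) - f'(t)`, of norm at most `K ‖z‖ ^ s` by Hölder continuity
of `f'`, so the mean value theorem applied to `Δ` gives `K ‖z‖ ^ s ‖x - y‖`. The smaller of the two
bounds is at most `max (2 G) K ‖x - y‖ min 1 (‖z‖ ^ s)`.
-/

section SecondDifference

variable {E F : Type*}

theorem norm_second_difference_le_two_mul [SeminormedAddCommGroup E] [SeminormedAddCommGroup F]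
    {f : E → F} {G : ℝ} (hf : ∀ a b, ‖f a - f b‖ ≤ G * ‖a - b‖) (x y z : E) :
    ‖f (x + z) - f x - f (y + z) + f y‖ ≤ 2 * G * ‖x - y‖ :=
  calc ‖f (x + z) - f x - f (y + z) + f y‖
      = ‖(f (x + z) - f (y + z)) - (f x - f y)‖ := by congr 1; abel
    _ ≤ ‖f (x + z) - f (y + z)‖ + ‖f x - f y‖ := norm_sub_le _ _
    _ ≤ G * ‖x - y‖ + G * ‖x - y‖ := by
      gcongr
      · simpa only [add_sub_add_right_eq_sub] using hf (x + z) (y + z)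
      · exact hf x y
    _ = 2 * G * ‖x - y‖ := by ring

variable [NormedAddCommGroup E] [NormedSpace ℝ E] [NormedAddCommGroup F] [NormedSpace ℝ F]

theorem fderiv_sub_comp_add_right {f : E → F} {z t : E} (hfz : DifferentiableAt ℝ f (t + z))
    (hf : DifferentiableAt ℝ f t) :
    fderiv ℝ (fun x ↦ f (x + z) - f x) t = fderiv ℝ f (t + z) - fderiv ℝ f t := by
  rw [fderiv_fun_sub ((differentiableAt_comp_add_right z).2 hfz) hf, fderiv_comp_add_right]

theorem norm_second_difference_le_of_norm_fderiv_sub_le {f : E → F} (hf : Differentiable ℝ f)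
    {z : E} {C : ℝ} (hC : ∀ t, ‖fderiv ℝ f (t + z) - fderiv ℝ f t‖ ≤ C) (x y : E) :
    ‖f (x + z) - f x - f (y + z) + f y‖ ≤ C * ‖x - y‖ := by
  have hΔ : Differentiable ℝ fun t ↦ f (t + z) - f t :=
    (hf.comp (differentiable_id.add_const z)).sub hf
  have := convex_univ.norm_image_sub_le_of_norm_fderiv_le (fun t _ ↦ hΔ t)
    (fun t _ ↦ (fderiv_sub_comp_add_right (hf _) (hf t)).symm ▸ hC t) (Set.mem_univ y) (Set.mem_univ x)
  convert this using 2
  abel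

end SecondDifference

theorem min_mul_le_max_mul_mul_min {a b r t : ℝ} (hr : 0 ≤ r) (ht : 0 ≤ t) :
    min (a * r) (b * t * r) ≤ max a b * r * min 1 t := by
  rcases le_total t 1 with h | h
  · rw [min_eq_right h]
    calc min (a * r) (b * t * r) ≤ b * t * r := min_le_right _ _
      _ ≤ max a b * r * t := by nlinarith [mul_nonneg ht hr, le_max_right a b]
  · rw [min_eq_left h, mul_one]
    exact (min_le_left _ _).trans (mul_le_mul_of_nonneg_right (le_max_left a b) hr)

theorem second_difference_holder_bounded_general {d : ℕ} (f : EuclideanSpace ℝ (Fin d) → ℝ)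
    (s K G : ℝ)
    (hdiff : Differentiable ℝ f)
    (hgrad : ∀ x, ‖fderiv ℝ f x‖ ≤ G)
    (hholder : ∀ x y, ‖fderiv ℝ f x - fderiv ℝ f y‖ ≤ K * ‖x - y‖ ^ s) :
    ∀ x y z, |f (x + z) - f x - f (y + z) + f y| ≤
      max (2 * G) K * ‖x - y‖ * min 1 (‖z‖ ^ s) := by
  intro x y z
  have hlip : ∀ a b, ‖f a - f b‖ ≤ G * ‖a - b‖ := fun a b ↦
    convex_univ.norm_image_sub_le_of_norm_fderiv_le (fun t _ ↦ hdiff t) (fun t _ ↦ hgrad t)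
      (Set.mem_univ b) (Set.mem_univ a)
  have hsmall : ∀ t, ‖fderiv ℝ f (t + z) - fderiv ℝ f t‖ ≤ K * ‖z‖ ^ s := fun t ↦ by
    simpa only [add_sub_cancel_left] using hholder (t + z) t
  rw [← Real.norm_eq_abs]
  calc ‖f (x + z) - f x - f (y + z) + f y‖
      ≤ min (2 * G * ‖x - y‖) (K * ‖z‖ ^ s * ‖x - y‖) :=
        le_min (norm_second_difference_le_two_mul hlip x y z)
          (norm_second_difference_le_of_norm_fderiv_sub_le hdiff hsmall x y)
    _ ≤ max (2 * G) K * ‖x - y‖ * min 1 (‖z‖ ^ s) :=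
        min_mul_le_max_mul_mul_min (norm_nonneg _) (Real.rpow_nonneg (norm_nonneg z) s)

theorem second_difference_holder_bounded {d : ℕ} (f : EuclideanSpace ℝ (Fin d) → ℝ)
    (s K G : ℝ) (hs0 : 0 < s) (hs1 : s ≤ 1) (hK : 0 ≤ K) (hG : 0 ≤ G)
    (hdiff : Differentiable ℝ f)
    (hgrad : ∀ x, ‖fderiv ℝ f x‖ ≤ G)
    (hholder : ∀ x y, ‖fderiv ℝ f x - fderiv ℝ f y‖ ≤ K * ‖x - y‖ ^ s) :
    ∀ x y z, |f (x + z) - f x - f (y + z) + f y| ≤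
      max (2 * G) K * ‖x - y‖ * min 1 (‖z‖ ^ s) :=
  second_difference_holder_bounded_general f s K G hdiff hgrad hholder
end

section
/- For every p ≥ 2 and every measurable g : ℝ^d → ℝ with g ∈ L^p, and every finite symmetric measure ν on ℝ^d, defining Lg(x) = ∫ (g(x+z) − g(x)) ν(dz), it holds that ∫_{ℝ^d} |g(x)|^{p−2} g(x) Lg(x) dx ≤ (2/p) ∫_{ℝ^d} |g(x)|^{p/2} L(|g|^{p/2})(x) dx. -/
/-!
For `p ≥ 2` the function `t ↦ |t| ^ (p / 2)` is convex, so its tangent line at `b` lies below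
it: `|a| ^ (p / 2) - |b| ^ (p / 2) ≥ (p / 2) |b| ^ (p / 2 - 2) b (a - b)`. Multiplying by
`|b| ^ (p / 2)` and taking `a = g (x + z)`, `b = g x` compares the two integrands for every `x`
and `z`. Fubini on `volume × ν` then integrates this comparison: both integrands are dominated by
`2 |g (x + z)| ^ p + 2 |g x| ^ p`, which is integrable because Lebesgue measure is translation
invariant and `ν` is finite.
-/

open MeasureTheory

namespace Real

theorem mul_rpow_sub_one_mul_sub_le_rpow_sub_rpow {q a b : ℝ} (hq : 1 ≤ q) (ha : 0 ≤ a)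
    (hb : 0 < b) : q * b ^ (q - 1) * (a - b) ≤ a ^ q - b ^ q := by
  have bernoulli := one_add_mul_self_le_rpow_one_add
    (s := a / b - 1) (by linarith [div_nonneg ha hb.le]) hq
  rw [add_sub_cancel, div_rpow ha hb.le, le_div_iff₀ (by positivity)] at bernoulli
  rw [rpow_sub_one hb.ne']
  have rescale : q * (b ^ q / b) * (a - b) = q * (a / b - 1) * b ^ q := by field_simp
  linarith

theorem rpow_mul_rpow_le_rpow_add_rpow {u v s t : ℝ} (hu : 0 ≤ u) (hv : 0 ≤ v) (hs : 0 ≤ s)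
    (ht : 0 ≤ t) (hst : s + t ≠ 0) : u ^ s * v ^ t ≤ u ^ (s + t) + v ^ (s + t) := by
  have hm : 0 ≤ max u v := le_max_of_le_left hu
  calc u ^ s * v ^ t ≤ max u v ^ s * max u v ^ t := by
        gcongr
        · exact le_max_left u v
        · exact le_max_right u v
    _ = max u v ^ (s + t) := (rpow_add' hm hst).symm
    _ ≤ u ^ (s + t) + v ^ (s + t) := by
        rcases max_choice u v with h | h <;> rw [h]
        · linarith [rpow_nonneg hv (s + t)]
        · linarith [rpow_nonneg hu (s + t)]

end Real

open Real

theorem abs_rpow_sub_two_mul_mul_sub_le {p : ℝ} (hp : 2 ≤ p) (a b : ℝ) :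
    |b| ^ (p - 2) * b * (a - b) ≤ 2 / p * (|b| ^ (p / 2) * (|a| ^ (p / 2) - |b| ^ (p / 2))) := by
  rcases eq_or_ne b 0 with rfl | hb
  · simp [zero_rpow (by linarith : p / 2 ≠ 0)]
  have hb' : 0 < |b| := abs_pos.mpr hb
  have tangent := mul_rpow_sub_one_mul_sub_le_rpow_sub_rpow (q := p / 2) (by linarith)
    (abs_nonneg a) hb'
  have split : |b| ^ (p - 2) * |b| = 2 / p * |b| ^ (p / 2) * (p / 2 * |b| ^ (p / 2 - 1)) := by
    rw [← rpow_add_one hb'.ne', show p - 2 + 1 = p / 2 + (p / 2 - 1) by ring,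
      rpow_add hb']
    field_simp
  calc |b| ^ (p - 2) * b * (a - b) = |b| ^ (p - 2) * (b * a - b * b) := by ring
    _ ≤ |b| ^ (p - 2) * (|b| * |a| - |b| * |b|) := by
        refine mul_le_mul_of_nonneg_left ?_ (by positivity)
        rw [abs_mul_abs_self, ← abs_mul]
        linarith [le_abs_self (b * a)]
    _ = |b| ^ (p - 2) * |b| * (|a| - |b|) := by ring
    _ ≤ 2 / p * (|b| ^ (p / 2) * (|a| ^ (p / 2) - |b| ^ (p / 2))) := by
        rw [split, mul_assoc, mul_assoc]
        gcongr

theorem abs_abs_rpow_sub_two_mul_mul_sub_le {p : ℝ} (hp : 2 ≤ p) (a b : ℝ) :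
    |(|b| ^ (p - 2) * b * (a - b))| ≤ 2 * |a| ^ p + 2 * |b| ^ p := by
  have young := rpow_mul_rpow_le_rpow_add_rpow (abs_nonneg b) (abs_nonneg a)
    (s := p - 1) (t := 1) (by linarith) zero_le_one (by linarith)
  rw [sub_add_cancel, rpow_one] at young
  have hpow : |b| ^ (p - 2) * |b| = |b| ^ (p - 1) := by
    rw [← rpow_add_one' (abs_nonneg b) (by linarith)]; ring_nf
  have hbp : |b| ^ (p - 1) * |b| = |b| ^ p := by
    rw [← rpow_add_one' (abs_nonneg b) (by linarith)]; ring_nf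
  calc |(|b| ^ (p - 2) * b * (a - b))| = |b| ^ (p - 1) * |a - b| := by
        rw [abs_mul, abs_mul, abs_of_nonneg (rpow_nonneg (abs_nonneg b) _), hpow]
    _ ≤ |b| ^ (p - 1) * (|a| + |b|) := by gcongr; exact abs_sub _ _
    _ ≤ 2 * |a| ^ p + 2 * |b| ^ p := by
        rw [mul_add, hbp]; linarith [rpow_nonneg (abs_nonneg a) p]

theorem abs_two_div_mul_abs_rpow_half_mul_sub_le {p : ℝ} (hp : 2 ≤ p) (a b : ℝ) :
    |2 / p * (|b| ^ (p / 2) * (|a| ^ (p / 2) - |b| ^ (p / 2)))| ≤ 2 * |a| ^ p + 2 * |b| ^ p := by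
  have young := rpow_mul_rpow_le_rpow_add_rpow (abs_nonneg b) (abs_nonneg a)
    (s := p / 2) (t := p / 2) (by linarith) (by linarith) (by linarith)
  rw [add_halves] at young
  have hbp : |b| ^ (p / 2) * |b| ^ (p / 2) = |b| ^ p := by
    rw [← rpow_add' (abs_nonneg b) (by linarith), add_halves]
  have ha : 0 ≤ |a| ^ (p / 2) := by positivity
  have hb : 0 ≤ |b| ^ (p / 2) := by positivity
  calc |2 / p * (|b| ^ (p / 2) * (|a| ^ (p / 2) - |b| ^ (p / 2)))|
      ≤ |(|b| ^ (p / 2) * (|a| ^ (p / 2) - |b| ^ (p / 2)))| := by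
        rw [abs_mul, abs_of_pos (by positivity : (0 : ℝ) < 2 / p)]
        exact mul_le_of_le_one_left (abs_nonneg _) ((div_le_one (by linarith)).2 hp)
    _ ≤ |b| ^ (p / 2) * (|a| ^ (p / 2) + |b| ^ (p / 2)) := by
        rw [abs_mul, abs_of_nonneg hb]
        gcongr
        exact abs_sub_le_iff.2 ⟨by linarith, by linarith⟩
    _ ≤ 2 * |a| ^ p + 2 * |b| ^ p := by
        rw [mul_add, hbp]; linarith [rpow_nonneg (abs_nonneg a) p]

section Translation

variable {G : Type*} [MeasurableSpace G] [AddGroup G] [MeasurableAdd₂ G]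
  {μ : Measure G} [SFinite μ] [μ.IsAddRightInvariant] {ν : Measure G} [IsFiniteMeasure ν]

theorem MeasureTheory.Integrable.comp_add_prod {f : G → ℝ} (hf : Integrable f μ) :
    Integrable (fun xz : G × G => f (xz.1 + xz.2)) (μ.prod ν) :=
  ((measurePreserving_add_prod μ ν).integrable_comp_of_integrable (hf.comp_fst ν) :)

theorem MeasureTheory.Integrable.of_abs_le_comp_add_add {f : G → ℝ} (hf : Integrable f μ)
    {F : G × G → ℝ} (hF : AEStronglyMeasurable F (μ.prod ν))
    (hle : ∀ x z, |F (x, z)| ≤ f (x + z) + f x) : Integrable F (μ.prod ν) :=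
  (hf.comp_add_prod.add (hf.comp_fst ν)).mono' hF (ae_of_all _ fun xz => hle xz.1 xz.2)

end Translation

theorem MeasureTheory.integral_integral_mono {α β : Type*} [MeasurableSpace α]
    [MeasurableSpace β] {μ : Measure α} [SFinite μ] {ν : Measure β} [SFinite ν] {F H : α → β → ℝ}
    (hF : Integrable (Function.uncurry F) (μ.prod ν))
    (hH : Integrable (Function.uncurry H) (μ.prod ν))
    (hle : ∀ x y, F x y ≤ H x y) : ∫ x, ∫ y, F x y ∂ν ∂μ ≤ ∫ x, ∫ y, H x y ∂ν ∂μ := by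
  have := integral_mono hF hH fun xy => hle xy.1 xy.2
  rwa [integral_prod _ hF, integral_prod _ hH] at this

theorem moser_type_inequality_general {d : ℕ} (ν : Measure (EuclideanSpace ℝ (Fin d)))
    [IsFiniteMeasure ν]
    (p : ℝ) (hp : 2 ≤ p) (g : EuclideanSpace ℝ (Fin d) → ℝ) (hmeas : Measurable g)
    (hLp : MeasureTheory.MemLp g (ENNReal.ofReal p)) :
    ∫ x, |g x| ^ (p - 2) * g x * (∫ z, (g (x + z) - g x) ∂ν) ≤
      (2 / p) * ∫ x, |g x| ^ (p / 2) * (∫ z, (|g (x + z)| ^ (p / 2) - |g x| ^ (p / 2)) ∂ν) := by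
  have hgp : Integrable (fun x => 2 * |g x| ^ p) := by
    have hint := hLp.integrable_norm_rpow (ENNReal.ofReal_pos.2 (by linarith)).ne'
      ENNReal.ofReal_ne_top
    rw [ENNReal.toReal_ofReal (by linarith)] at hint
    exact hint.const_mul 2
  rw [← integral_const_mul]
  simp_rw [← integral_const_mul]
  refine integral_integral_mono ?_ ?_ fun x z =>
    abs_rpow_sub_two_mul_mul_sub_le hp (g (x + z)) (g x)
  · exact hgp.of_abs_le_comp_add_add (by fun_prop) fun x z =>
      abs_abs_rpow_sub_two_mul_mul_sub_le hp _ _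
  · exact hgp.of_abs_le_comp_add_add (by fun_prop) fun x z =>
      abs_two_div_mul_abs_rpow_half_mul_sub_le hp _ _

theorem moser_type_inequality {d : ℕ} (ν : Measure (EuclideanSpace ℝ (Fin d)))
    [IsFiniteMeasure ν] (hsym : ν.map (fun z => -z) = ν)
    (p : ℝ) (hp : 2 ≤ p) (g : EuclideanSpace ℝ (Fin d) → ℝ) (hmeas : Measurable g)
    (hbd : ∃ C : ℝ, ∀ x, |g x| ≤ C)
    (hLp : MeasureTheory.MemLp g (ENNReal.ofReal p)) :
    ∫ x, |g x| ^ (p - 2) * g x * (∫ z, (g (x + z) - g x) ∂ν) ≤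
      (2 / p) * ∫ x, |g x| ^ (p / 2) * (∫ z, (|g (x + z)| ^ (p / 2) - |g x| ^ (p / 2)) ∂ν) :=
  moser_type_inequality_general ν p hp g hmeas hLp
end
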